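/- Assume every travel-time function d_a is continuous and nondecreasing and the charging unit price function λ_e : [0, ∞) → ℝ is continuous and nondecreasing. Then the Beckmann function B is convex on the (convex) feasible set of path flows, and a feasible path-flow vector f is a Wardrop Equilibrium if and only if f is a global minimizer of B over the feasible set. -/
import Mathlib


open Finset MeasureTheory

/-- The data of the multiclass (EV/GV) routing game with coupled charging.
Vehicle classes are indexed by `Bool`: `true` is the electric class (e) and
`false` is the gasoline class (g). Paths are gathered in the type `R`, the
origin–destination pair of a path `r` being `od r` (so `R_k = od ⁻¹' {k}`). -/
structure RoutingGame where
  /-- arcs -/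
  A : Type
  finA : Fintype A
  /-- paths -/
  R : Type
  finR : Fintype R
  /-- origin–destination pairs -/
  K : Type
  /-- the O-D pair of each path -/
  od : R → K
  /-- each O-D pair has at least one path -/
  od_surj : Function.Surjective od
  /-- arc lengths -/
  len : A → ℝ
  len_pos : ∀ a, 0 < len a
  /-- travel demands -/
  D : K → ℝ
  D_nonneg : ∀ k, 0 ≤ D k
  /-- arc–path incidence `δ_{a,r} ∈ {0,1}` -/
  δ : A → R → ℝ
  δ_mem : ∀ a r, δ a r = 0 ∨ δ a r = 1
  /-- class shares `X_e, X_g` -/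
  X : Bool → ℝ
  X_nonneg : ∀ s, 0 ≤ X s
  /-- energy consumptions per distance unit `m_e, m_g` -/
  m : Bool → ℝ
  m_pos : ∀ s, 0 < m s
  /-- travel-time (congestion) functions `d_a` -/
  d : A → ℝ → ℝ
  /-- tolls `t_{a,s}` -/
  toll : A → Bool → ℝ
  toll_nonneg : ∀ a s, 0 ≤ toll a s
  /-- value of time `τ` -/
  τ : ℝ
  τ_pos : 0 < τ
  /-- (constant) gasoline unit price `λ_g` -/
  lamg : ℝ
  lamg_nonneg : 0 ≤ lamg
  /-- charging unit price function `λ_e` -/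
  lame : ℝ → ℝ

attribute [instance] RoutingGame.finA RoutingGame.finR

namespace RoutingGame

variable (G : RoutingGame)

/-- Arc flow of class `s`: `x_{a,s} = ∑_r δ_{a,r} f_{r,s}`. -/
noncomputable def arcFlow (f : G.R → Bool → ℝ) (a : G.A) (s : Bool) : ℝ :=
  ∑ r, G.δ a r * f r s

/-- Total arc flow `x_a = x_{a,e} + x_{a,g}`. -/
noncomputable def totFlow (f : G.R → Bool → ℝ) (a : G.A) : ℝ :=
  G.arcFlow f a true + G.arcFlow f a false

open scoped Classical in
/-- Feasible path flows: nonnegative and meeting the demand `X_s D_k` of each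
O-D pair `k` for each class `s`. -/
def Feasible (f : G.R → Bool → ℝ) : Prop :=
  (∀ r s, 0 ≤ f r s) ∧
  ∀ (k : G.K) (s : Bool), (∑ r, if G.od r = k then f r s else 0) = G.X s * G.D k

/-- Aggregate energy need of class `s`: `L_s = m_s ∑_a x_{a,s} l_a`. -/
noncomputable def Lneed (f : G.R → Bool → ℝ) (s : Bool) : ℝ :=
  G.m s * ∑ a, G.arcFlow f a s * G.len a

/-- Unit energy price of class `s` at flow `f`: `λ_e(L_e(f))` for EV, `λ_g` for GV. -/
noncomputable def price (f : G.R → Bool → ℝ) (s : Bool) : ℝ :=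
  if s then G.lame (G.Lneed f true) else G.lamg

/-- Cost of path `r` for class `s` at flow `f`:
`c_{r,s}(f) = ∑_a δ_{a,r} (τ d_a(x_a) + t_{a,s} + l_a m_s λ_s)`. -/
noncomputable def cost (f : G.R → Bool → ℝ) (r : G.R) (s : Bool) : ℝ :=
  ∑ a, G.δ a r * (G.τ * G.d a (G.totFlow f a) + G.toll a s + G.len a * G.m s * G.price f s)

/-- Wardrop Equilibrium: feasible, and for each class any used path is not more
costly than any other path with the same O-D pair. -/
def IsWE (f : G.R → Bool → ℝ) : Prop :=
  G.Feasible f ∧ ∀ (s : Bool) (r r' : G.R), G.od r = G.od r' → 0 < f r s →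
    G.cost f r s ≤ G.cost f r' s

/-- The Beckmann function
`B(f) = τ ∑_a ∫_0^{x_a} d_a + ∑_{a,s} t_{a,s} x_{a,s} + ∫_0^{L_e(f)} λ_e + λ_g L_g(f)`. -/
noncomputable def Beckmann (f : G.R → Bool → ℝ) : ℝ :=
  G.τ * ∑ a, (∫ u in (0 : ℝ)..G.totFlow f a, G.d a u)
    + ∑ a, ∑ s : Bool, G.toll a s * G.arcFlow f a s
    + (∫ u in (0 : ℝ)..G.Lneed f true, G.lame u)
    + G.lamg * G.Lneed f false

end RoutingGame


namespace RoutingGame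
variable (G : RoutingGame)

lemma prim_subgrad {g : ℝ → ℝ} (hc : ContinuousOn g (Set.Ici 0)) (hm : MonotoneOn g (Set.Ici 0))
    {x y : ℝ} (hx : (0:ℝ) ≤ x) (hy : (0:ℝ) ≤ y) :
    g x * (y - x) ≤ (∫ u in (0:ℝ)..y, g u) - ∫ u in (0:ℝ)..x, g u := by
  have hint : ∀ {a b : ℝ}, 0 ≤ a → 0 ≤ b → IntervalIntegrable g MeasureTheory.volume a b := by
    intro a b ha hb
    exact (hc.mono (fun u hu => le_trans (le_inf ha hb) hu.1)).intervalIntegrable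
  have key : (∫ u in (0:ℝ)..y, g u) - ∫ u in (0:ℝ)..x, g u = ∫ u in x..y, g u := by
    rw [intervalIntegral.integral_interval_sub_left (hint le_rfl hy) (hint le_rfl hx)]
  rw [key]
  rcases le_total x y with h | h
  · have : g x * (y - x) = ∫ _ in x..y, g x := by simp [mul_comm]
    rw [this]
    apply intervalIntegral.integral_mono_on h (intervalIntegrable_const) (hint hx hy)
    intro u hu
    exact hm hx (le_trans hx hu.1) hu.1
  · have h1 : (∫ u in x..y, g u) = - ∫ u in y..x, g u := (intervalIntegral.integral_symm _ _)
    rw [h1]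
    have : g x * (y - x) = - ∫ _ in y..x, g x := by simp; ring
    rw [this]
    apply neg_le_neg
    apply intervalIntegral.integral_mono_on h (hint hy hx) intervalIntegrable_const
    intro u hu
    exact hm (le_trans hy hu.1) hx hu.2


lemma δ_nonneg (a : G.A) (r : G.R) : 0 ≤ G.δ a r := by
  rcases G.δ_mem a r with h | h <;> simp [h]

lemma arcFlow_nonneg {f : G.R → Bool → ℝ} (hf : G.Feasible f) (a : G.A) (s : Bool) :
    0 ≤ G.arcFlow f a s :=
  Finset.sum_nonneg fun r _ => mul_nonneg (G.δ_nonneg a r) (hf.1 r s)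

lemma totFlow_nonneg {f : G.R → Bool → ℝ} (hf : G.Feasible f) (a : G.A) :
    0 ≤ G.totFlow f a :=
  add_nonneg (G.arcFlow_nonneg hf a true) (G.arcFlow_nonneg hf a false)

lemma Lneed_nonneg {f : G.R → Bool → ℝ} (hf : G.Feasible f) (s : Bool) :
    0 ≤ G.Lneed f s :=
  mul_nonneg (G.m_pos s).le (Finset.sum_nonneg fun a _ =>
    mul_nonneg (G.arcFlow_nonneg hf a s) (G.len_pos a).le)


lemma swap_helper (κ : G.A → Bool → ℝ) (h : G.R → Bool → ℝ) :
    ∑ r, ∑ s : Bool, (∑ a, G.δ a r * κ a s) * h r s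
    = ∑ a, ∑ s : Bool, κ a s * (∑ r, G.δ a r * h r s) := by
  simp only [Finset.sum_mul, Finset.mul_sum]
  conv_lhs => rw [Finset.sum_comm]
  conv_rhs => rw [Finset.sum_comm]
  refine Finset.sum_congr rfl fun s _ => ?_
  rw [Finset.sum_comm]
  exact Finset.sum_congr rfl fun a _ => Finset.sum_congr rfl fun r _ => by ring

/-- Pairing identity -/
lemma pairing_eq (f f' : G.R → Bool → ℝ) :
    ∑ r, ∑ s : Bool, G.cost f r s * (f' r s - f r s)
    = G.τ * ∑ a, G.d a (G.totFlow f a) * (G.totFlow f' a - G.totFlow f a)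
      + ∑ a, ∑ s : Bool, G.toll a s * (G.arcFlow f' a s - G.arcFlow f a s)
      + G.lame (G.Lneed f true) * (G.Lneed f' true - G.Lneed f true)
      + G.lamg * (G.Lneed f' false - G.Lneed f false) := by
  have harc : ∀ a s, (∑ r, G.δ a r * (f' r s - f r s)) = G.arcFlow f' a s - G.arcFlow f a s := by
    intro a s
    simp only [arcFlow, mul_sub, Finset.sum_sub_distrib]
  calc ∑ r, ∑ s : Bool, G.cost f r s * (f' r s - f r s)
      = ∑ a, ∑ s : Bool, (G.τ * G.d a (G.totFlow f a) + G.toll a s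
          + G.len a * G.m s * G.price f s) * (∑ r, G.δ a r * (f' r s - f r s)) := by
        rw [← G.swap_helper (fun a s => G.τ * G.d a (G.totFlow f a) + G.toll a s
          + G.len a * G.m s * G.price f s) (fun r s => f' r s - f r s)]
        rfl
    _ = ∑ a, ∑ s : Bool, (G.τ * G.d a (G.totFlow f a) * (G.arcFlow f' a s - G.arcFlow f a s)
          + G.toll a s * (G.arcFlow f' a s - G.arcFlow f a s)
          + G.price f s * (G.m s * ((G.arcFlow f' a s - G.arcFlow f a s) * G.len a))) := by
        refine Finset.sum_congr rfl fun a _ => Finset.sum_congr rfl fun s _ => ?_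
        rw [harc a s]; ring
    _ = _ := by
        have pt : G.price f true = G.lame (G.Lneed f true) := by simp [price]
        have pf : G.price f false = G.lamg := by simp [price]
        simp only [pt, pf, Fintype.sum_bool, totFlow, Lneed]
        simp only [Finset.mul_sum, mul_sub, sub_mul, mul_add, add_mul,
          Finset.sum_sub_distrib, Finset.sum_add_distrib]
        ring_nf


/-- Master subgradient inequality for the Beckmann function. -/
lemma master (hd_cont : ∀ a, ContinuousOn (G.d a) (Set.Ici 0))
    (hd_mono : ∀ a, MonotoneOn (G.d a) (Set.Ici 0))
    (hlame_cont : ContinuousOn G.lame (Set.Ici 0))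
    (hlame_mono : MonotoneOn G.lame (Set.Ici 0))
    {f f' : G.R → Bool → ℝ} (hf : G.Feasible f) (hf' : G.Feasible f') :
    G.Beckmann f + ∑ r, ∑ s : Bool, G.cost f r s * (f' r s - f r s) ≤ G.Beckmann f' := by
  rw [G.pairing_eq f f']
  have h1 : ∀ a : G.A, G.d a (G.totFlow f a) * (G.totFlow f' a - G.totFlow f a)
      ≤ (∫ u in (0:ℝ)..G.totFlow f' a, G.d a u) - ∫ u in (0:ℝ)..G.totFlow f a, G.d a u :=
    fun a => prim_subgrad (hd_cont a) (hd_mono a) (G.totFlow_nonneg hf a) (G.totFlow_nonneg hf' a)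
  have H1 : ∑ a, G.d a (G.totFlow f a) * (G.totFlow f' a - G.totFlow f a)
      ≤ (∑ a, ∫ u in (0:ℝ)..G.totFlow f' a, G.d a u)
        - ∑ a, ∫ u in (0:ℝ)..G.totFlow f a, G.d a u := by
    rw [← Finset.sum_sub_distrib]
    exact Finset.sum_le_sum fun a _ => h1 a
  have H1' := mul_le_mul_of_nonneg_left H1 G.τ_pos.le
  have H2 : G.lame (G.Lneed f true) * (G.Lneed f' true - G.Lneed f true)
      ≤ (∫ u in (0:ℝ)..G.Lneed f' true, G.lame u) - ∫ u in (0:ℝ)..G.Lneed f true, G.lame u :=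
    prim_subgrad hlame_cont hlame_mono (G.Lneed_nonneg hf true) (G.Lneed_nonneg hf' true)
  have H3 : ∑ a, ∑ s : Bool, G.toll a s * (G.arcFlow f' a s - G.arcFlow f a s)
      = (∑ a, ∑ s : Bool, G.toll a s * G.arcFlow f' a s)
        - ∑ a, ∑ s : Bool, G.toll a s * G.arcFlow f a s := by
    simp [mul_sub, Finset.sum_sub_distrib]
  simp only [Beckmann, mul_sub] at *
  linarith


open scoped Classical in
/-- Variational inequality at a Wardrop equilibrium. -/
lemma VI {f f' : G.R → Bool → ℝ} (hWE : G.IsWE f) (hf' : G.Feasible f') :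
    0 ≤ ∑ r, ∑ s : Bool, G.cost f r s * (f' r s - f r s) := by
  rw [Finset.sum_comm]
  refine Finset.sum_nonneg fun s _ => ?_
  -- fiberwise minimal cost
  set C : G.K → ℝ := fun k =>
    if h : (Finset.univ.filter (fun r' => G.od r' = k)).Nonempty then
      (Finset.univ.filter (fun r' => G.od r' = k)).inf' h (fun r' => G.cost f r' s)
    else 0 with hC
  have hCle : ∀ r : G.R, C (G.od r) ≤ G.cost f r s := by
    intro r
    have hne : (Finset.univ.filter (fun r' => G.od r' = G.od r)).Nonempty :=
      ⟨r, by simp⟩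
    simp only [hC, dif_pos hne]
    exact Finset.inf'_le _ (by simp)
  have hCeq : ∀ r : G.R, 0 < f r s → G.cost f r s = C (G.od r) := by
    intro r hr
    refine le_antisymm ?_ (hCle r)
    have hne : (Finset.univ.filter (fun r' => G.od r' = G.od r)).Nonempty := ⟨r, by simp⟩
    simp only [hC, dif_pos hne]
    refine Finset.le_inf' _ _ fun r' hr' => ?_
    have hod : G.od r' = G.od r := (Finset.mem_filter.mp hr').2
    exact hWE.2 s r r' hod.symm hr
  -- sum of C(od r) * g r s depends only on demands
  have hsum : ∀ g : G.R → Bool → ℝ, G.Feasible g →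
      (∑ r, C (G.od r) * g r s) = ∑ k ∈ Finset.univ.image G.od, C k * (G.X s * G.D k) := by
    intro g hg
    rw [← Finset.sum_fiberwise_of_maps_to (g := G.od) (fun r _ => Finset.mem_image_of_mem _ (Finset.mem_univ r))]
    refine Finset.sum_congr rfl fun k _ => ?_
    have : ∀ r ∈ Finset.univ.filter (fun r => G.od r = k), C (G.od r) * g r s = C k * g r s := by
      intro r hr
      rw [(Finset.mem_filter.mp hr).2]
    rw [Finset.sum_congr rfl this, ← Finset.mul_sum]
    congr 1
    rw [Finset.sum_filter]
    exact hg.2 k s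
  have key : (∑ r, C (G.od r) * f' r s) = ∑ r, C (G.od r) * f r s := by
    rw [hsum f' hf', hsum f hWE.1]
  have h1 : (∑ r, C (G.od r) * f' r s) ≤ ∑ r, G.cost f r s * f' r s :=
    Finset.sum_le_sum fun r _ => mul_le_mul_of_nonneg_right (hCle r) (hf'.1 r s)
  have h2 : (∑ r, G.cost f r s * f r s) = ∑ r, C (G.od r) * f r s := by
    refine Finset.sum_congr rfl fun r _ => ?_
    rcases eq_or_lt_of_le (hWE.1.1 r s) with h | h
    · rw [← h]; ring
    · rw [hCeq r h]
  have : (∑ r, G.cost f r s * (f' r s - f r s))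
      = (∑ r, G.cost f r s * f' r s) - ∑ r, G.cost f r s * f r s := by
    simp [mul_sub, Finset.sum_sub_distrib]
  rw [this, h2]
  linarith [key ▸ h1]


open scoped Classical in
lemma feasible_convex : Convex ℝ {f : G.R → Bool → ℝ | G.Feasible f} := by
  intro f hf f' hf' a b ha hb hab
  constructor
  · intro r s
    have : (a • f + b • f') r s = a * f r s + b * f' r s := by
      simp [smul_eq_mul]
    rw [this]
    exact add_nonneg (mul_nonneg ha (hf.1 r s)) (mul_nonneg hb (hf'.1 r s))
  · intro k s
    have h1 : ∀ r : G.R, (if G.od r = k then (a • f + b • f') r s else 0)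
        = a * (if G.od r = k then f r s else 0) + b * (if G.od r = k then f' r s else 0) := by
      intro r
      by_cases h : G.od r = k <;> simp [h, smul_eq_mul]
    simp only [h1, Finset.sum_add_distrib, ← Finset.mul_sum]
    rw [hf.2 k s, hf'.2 k s]
    ring_nf
    linear_combination (G.X s * G.D k) * hab

lemma beckmann_convexOn (hd_cont : ∀ a, ContinuousOn (G.d a) (Set.Ici 0))
    (hd_mono : ∀ a, MonotoneOn (G.d a) (Set.Ici 0))
    (hlame_cont : ContinuousOn G.lame (Set.Ici 0))
    (hlame_mono : MonotoneOn G.lame (Set.Ici 0)) :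
    ConvexOn ℝ {f : G.R → Bool → ℝ | G.Feasible f} G.Beckmann := by
  refine ⟨G.feasible_convex, ?_⟩
  intro f hf f' hf' a b ha hb hab
  set z : G.R → Bool → ℝ := a • f + b • f' with hz
  have hzf : G.Feasible z := G.feasible_convex hf hf' ha hb hab
  have M1 := G.master hd_cont hd_mono hlame_cont hlame_mono hzf hf
  have M2 := G.master hd_cont hd_mono hlame_cont hlame_mono hzf hf'
  set P1 := ∑ r, ∑ s : Bool, G.cost z r s * (f r s - z r s) with hP1
  set P2 := ∑ r, ∑ s : Bool, G.cost z r s * (f' r s - z r s) with hP2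
  have hpt : ∀ (ρ : G.R) (σ : Bool),
      a * (f ρ σ - z ρ σ) + b * (f' ρ σ - z ρ σ) = 0 := by
    intro ρ σ
    have : z ρ σ = a * f ρ σ + b * f' ρ σ := by simp [hz, smul_eq_mul]
    rw [this]
    linear_combination (-(a * f ρ σ + b * f' ρ σ)) * hab
  have hzero : a * P1 + b * P2 = 0 := by
    rw [hP1, hP2, Finset.mul_sum, Finset.mul_sum, ← Finset.sum_add_distrib]
    rw [Finset.sum_eq_zero]
    intro ρ _
    rw [Finset.mul_sum, Finset.mul_sum, ← Finset.sum_add_distrib]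
    rw [Finset.sum_eq_zero]
    intro σ _
    have : a * (G.cost z ρ σ * (f ρ σ - z ρ σ)) + b * (G.cost z ρ σ * (f' ρ σ - z ρ σ))
        = G.cost z ρ σ * (a * (f ρ σ - z ρ σ) + b * (f' ρ σ - z ρ σ)) := by ring
    rw [this, hpt ρ σ, mul_zero]
  have ha1 := mul_le_mul_of_nonneg_left M1 ha
  have hb1 := mul_le_mul_of_nonneg_left M2 hb
  rw [mul_add] at ha1 hb1
  have hbz : a * G.Beckmann z + b * G.Beckmann z = G.Beckmann z := by
    rw [← add_mul, hab, one_mul]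
  simp only [smul_eq_mul]
  linarith

lemma WE_imp_min (hd_cont : ∀ a, ContinuousOn (G.d a) (Set.Ici 0))
    (hd_mono : ∀ a, MonotoneOn (G.d a) (Set.Ici 0))
    (hlame_cont : ContinuousOn G.lame (Set.Ici 0))
    (hlame_mono : MonotoneOn G.lame (Set.Ici 0))
    {f : G.R → Bool → ℝ} (hWE : G.IsWE f) :
    ∀ f', G.Feasible f' → G.Beckmann f ≤ G.Beckmann f' := by
  intro f' hf'
  have := G.master hd_cont hd_mono hlame_cont hlame_mono hWE.1 hf'
  have h2 := G.VI hWE hf'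
  linarith


open scoped Classical in
lemma min_imp_WE (hd_cont : ∀ a, ContinuousOn (G.d a) (Set.Ici 0))
    (hd_mono : ∀ a, MonotoneOn (G.d a) (Set.Ici 0))
    (hlame_cont : ContinuousOn G.lame (Set.Ici 0))
    (hlame_mono : MonotoneOn G.lame (Set.Ici 0))
    {f : G.R → Bool → ℝ} (hf : G.Feasible f)
    (hmin : ∀ f', G.Feasible f' → G.Beckmann f ≤ G.Beckmann f') :
    G.IsWE f := by
  refine ⟨hf, ?_⟩
  intro s r r' hod hr
  by_cases hrr : r = r'
  · rw [hrr]
  -- perturbation direction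
  set v : G.R → Bool → ℝ := fun ρ σ =>
    (if ρ = r' ∧ σ = s then 1 else 0) - (if ρ = r ∧ σ = s then 1 else 0) with hv
  set F : ℝ → G.R → Bool → ℝ := fun ε ρ σ => f ρ σ + ε * v ρ σ with hF
  -- feasibility of the perturbed flows
  have hfeas : ∀ ε ∈ Set.Ioc (0:ℝ) (f r s), G.Feasible (F ε) := by
    intro ε hε
    constructor
    · intro ρ σ
      by_cases h1 : ρ = r ∧ σ = s
      · have hn : ¬(ρ = r' ∧ σ = s) := fun hc => hrr (h1.1.symm.trans hc.1)
        have heq : F ε ρ σ = f ρ σ - ε := by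
          simp only [hF, hv, if_pos h1, if_neg hn]
          ring
        rw [heq]
        have : ε ≤ f ρ σ := by rw [h1.1, h1.2]; exact hε.2
        linarith
      · by_cases h2 : ρ = r' ∧ σ = s
        · have : F ε ρ σ = f ρ σ + ε := by
            simp only [hF, hv, if_pos h2, if_neg h1]; ring
          rw [this]; linarith [hf.1 ρ σ, hε.1]
        · have : F ε ρ σ = f ρ σ := by
            simp only [hF, hv, if_neg h1, if_neg h2]; ring
          rw [this]; exact hf.1 ρ σ
    · intro k σ
      have hsplit : (∑ ρ, if G.od ρ = k then F ε ρ σ else 0)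
          = (∑ ρ, if G.od ρ = k then f ρ σ else 0)
            + ε * ∑ ρ, (if G.od ρ = k then v ρ σ else 0) := by
        rw [Finset.mul_sum, ← Finset.sum_add_distrib]
        refine Finset.sum_congr rfl fun ρ _ => ?_
        by_cases h : G.od ρ = k <;> simp [h, hF]
      have hind : ∀ r₀ : G.R, (∑ ρ, (if G.od ρ = k then (if ρ = r₀ ∧ σ = s then (1:ℝ) else 0) else 0))
          = if G.od r₀ = k ∧ σ = s then 1 else 0 := by
        intro r₀
        rw [Finset.sum_eq_single r₀]
        · by_cases h1 : G.od r₀ = k <;> by_cases h2 : σ = s <;> simp [h1, h2]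
        · intro ρ _ hρ
          simp [hρ]
        · simp
      have hvz : (∑ ρ, (if G.od ρ = k then v ρ σ else 0)) = 0 := by
        have : ∀ ρ, (if G.od ρ = k then v ρ σ else 0)
            = (if G.od ρ = k then (if ρ = r' ∧ σ = s then (1:ℝ) else 0) else 0)
              - (if G.od ρ = k then (if ρ = r ∧ σ = s then (1:ℝ) else 0) else 0) := by
          intro ρ
          by_cases h : G.od ρ = k <;> simp [h, hv]
        simp only [this, Finset.sum_sub_distrib, hind r', hind r, hod]
        ring
      rw [hsplit, hvz, mul_zero, add_zero]
      exact hf.2 k σ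
  -- the key inequality along the perturbation
  have hkey : ∀ ε ∈ Set.Ioc (0:ℝ) (f r s),
      0 ≤ G.cost (F ε) r' s - G.cost (F ε) r s := by
    intro ε hε
    have hM := G.master hd_cont hd_mono hlame_cont hlame_mono (hfeas ε hε) hf
    have hm := hmin (F ε) (hfeas ε hε)
    have hP : (∑ ρ, ∑ σ : Bool, G.cost (F ε) ρ σ * (f ρ σ - F ε ρ σ))
        = ε * (G.cost (F ε) r s - G.cost (F ε) r' s) := by
      have h1 : ∀ (ρ : G.R) (σ : Bool), f ρ σ - F ε ρ σ = -(ε * v ρ σ) := by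
        intro ρ σ; simp [hF]
      simp only [h1]
      have h2 : ∀ (ρ : G.R) (σ : Bool), G.cost (F ε) ρ σ * -(ε * v ρ σ)
          = ε * ((G.cost (F ε) ρ σ) * (if ρ = r ∧ σ = s then (1:ℝ) else 0))
            - ε * ((G.cost (F ε) ρ σ) * (if ρ = r' ∧ σ = s then (1:ℝ) else 0)) := by
        intro ρ σ; simp only [hv]; ring
      simp only [h2, Finset.sum_sub_distrib]
      have hind : ∀ r₀ : G.R, (∑ ρ, ∑ σ : Bool,
          ε * ((G.cost (F ε) ρ σ) * (if ρ = r₀ ∧ σ = s then (1:ℝ) else 0)))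
          = ε * G.cost (F ε) r₀ s := by
        intro r₀
        rw [Finset.sum_eq_single r₀]
        · rcases s with _ | _ <;> simp [Fintype.sum_bool]
        · intro ρ _ hρ
          simp [hρ]
        · simp
      rw [hind r, hind r']
      ring
    rw [hP] at hM
    nlinarith [hε.1]
  -- pass to the limit ε → 0⁺
  have hc : 0 < f r s := hr
  have hL : Filter.NeBot (nhdsWithin (0:ℝ) (Set.Ioc 0 (f r s))) :=
    left_nhdsWithin_Ioc_neBot hc
  set L := nhdsWithin (0:ℝ) (Set.Ioc 0 (f r s)) with hLdef
  have hFtends : ∀ (ρ : G.R) (σ : Bool),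
      Filter.Tendsto (fun ε => F ε ρ σ) L (nhds (f ρ σ)) := by
    intro ρ σ
    have : Filter.Tendsto (fun ε : ℝ => f ρ σ + ε * v ρ σ) (nhds 0) (nhds (f ρ σ + 0 * v ρ σ)) := by
      exact (continuous_const.add (continuous_id.mul continuous_const)).tendsto 0
    simpa using this.mono_left nhdsWithin_le_nhds
  have hmem : ∀ᶠ ε in L, ε ∈ Set.Ioc (0:ℝ) (f r s) := eventually_mem_nhdsWithin
  have harc : ∀ (a : G.A) (σ : Bool),
      Filter.Tendsto (fun ε => G.arcFlow (F ε) a σ) L (nhds (G.arcFlow f a σ)) := by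
    intro a σ
    simp only [arcFlow]
    exact tendsto_finset_sum _ fun ρ _ => (hFtends ρ σ).const_mul (G.δ a ρ)
  have hx0 : ∀ a : G.A, Filter.Tendsto (fun ε => G.totFlow (F ε) a) L (nhds (G.totFlow f a)) := by
    intro a
    simpa only [totFlow] using (harc a true).add (harc a false)
  have hdtends : ∀ a : G.A, Filter.Tendsto (fun ε => G.d a (G.totFlow (F ε) a)) L
      (nhds (G.d a (G.totFlow f a))) := by
    intro a
    have h2 : Filter.Tendsto (fun ε => G.totFlow (F ε) a) L
        (nhdsWithin (G.totFlow f a) (Set.Ici 0)) :=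
      tendsto_nhdsWithin_iff.mpr ⟨hx0 a,
        hmem.mono fun ε hε => G.totFlow_nonneg (hfeas ε hε) a⟩
    exact Filter.Tendsto.comp (hd_cont a (G.totFlow f a) (G.totFlow_nonneg hf a)) h2
  have hLtends : Filter.Tendsto (fun ε => G.Lneed (F ε) true) L (nhds (G.Lneed f true)) := by
    simp only [Lneed]
    exact (tendsto_finset_sum _ fun a _ => (harc a true).mul_const (G.len a)).const_mul (G.m true)
  have hprice : Filter.Tendsto (fun ε => G.price (F ε) s) L (nhds (G.price f s)) := by
    rcases s with _ | _
    · simp only [price]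
      exact tendsto_const_nhds
    · simp only [price, if_true]
      have h2 : Filter.Tendsto (fun ε => G.Lneed (F ε) true) L
          (nhdsWithin (G.Lneed f true) (Set.Ici 0)) :=
        tendsto_nhdsWithin_iff.mpr ⟨hLtends,
          hmem.mono fun ε hε => G.Lneed_nonneg (hfeas ε hε) true⟩
      exact Filter.Tendsto.comp (hlame_cont (G.Lneed f true) (G.Lneed_nonneg hf true)) h2
  have hcost : ∀ ρ : G.R, Filter.Tendsto (fun ε => G.cost (F ε) ρ s) L (nhds (G.cost f ρ s)) := by
    intro ρ
    simp only [cost]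
    refine tendsto_finset_sum _ fun a _ => ?_
    exact ((((hdtends a).const_mul G.τ).add tendsto_const_nhds).add
      (hprice.const_mul (G.len a * G.m s))).const_mul (G.δ a ρ)
  have hlim : Filter.Tendsto (fun ε => G.cost (F ε) r' s - G.cost (F ε) r s) L
      (nhds (G.cost f r' s - G.cost f r s)) := (hcost r').sub (hcost r)
  have := ge_of_tendsto hlim (Filter.eventually_of_mem self_mem_nhdsWithin
    (fun ε hε => hkey ε hε))
  linarith

end RoutingGame

/-- if the travel-time functions and the charging unit price are
continuous and nondecreasing, the Beckmann function is convex on the (convex) feasible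
set, and a feasible `f` is a Wardrop Equilibrium iff it minimizes the Beckmann function
over the feasible set. -/
theorem beckmann_convex_and_WE_iff_min (G : RoutingGame)
    (hd_cont : ∀ a, ContinuousOn (G.d a) (Set.Ici 0))
    (hd_mono : ∀ a, MonotoneOn (G.d a) (Set.Ici 0))
    (hlame_cont : ContinuousOn G.lame (Set.Ici 0))
    (hlame_mono : MonotoneOn G.lame (Set.Ici 0)) :
    ConvexOn ℝ {f : G.R → Bool → ℝ | G.Feasible f} G.Beckmann ∧
    ∀ f : G.R → Bool → ℝ, G.Feasible f →
      (G.IsWE f ↔ ∀ f', G.Feasible f' → G.Beckmann f ≤ G.Beckmann f') := by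
  
  refine ⟨G.beckmann_convexOn hd_cont hd_mono hlame_cont hlame_mono, ?_⟩
  intro f hf
  constructor
  · exact fun hWE => G.WE_imp_min hd_cont hd_mono hlame_cont hlame_mono hWE
  · exact fun hmin => G.min_imp_WE hd_cont hd_mono hlame_cont hlame_mono hf hmin
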